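/- arXiv:1608.08717 — 4 statements merged into one kernel-verified Lean document; each statement's English description precedes it below -/
import Mathlib

section
/- (Theorem 1 of the paper) Under conditions (A1) ∫ φ*_{ε,λ} dP_{ε,λ} = 0, (A2) lim_{λ→0} lim_{ε→0} ∫ φ*_{ε,λ} d(H_{x,λ} − P) = φ_P(x), and (A3) lim_{λ→0} lim_{ε→0} R(P*_{ε,λ}, P)/ε = 0, where Ψ(P*_{ε,λ}) − Ψ(P) = −∫ φ*_{ε,λ} dP + R(P*_{ε,λ}, P) and ∫ φ*_{ε,λ} dP*_{ε,λ} = 0, one has φ_P(x) = lim_{λ→0} lim_{ε→0} (Ψ(P*_{ε,λ}) − Ψ(P))/ε. -/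
open MeasureTheory Filter Topology

/-- Theorem 1 of the paper: iterated-limit secant representation of the EIF value. -/
theorem eif_secant_representation {α : Type*} [MeasurableSpace α]
    (P : Measure α) [IsProbabilityMeasure P]
    (H : ℝ → Measure α) (hHprob : ∀ lam : ℝ, 0 < lam → IsProbabilityMeasure (H lam))
    (hHac : ∀ lam : ℝ, 0 < lam → H lam ≪ P)
    (Pstar : ℝ → ℝ → Measure α)
    (hPstarprob : ∀ ε lam : ℝ, 0 < ε → 0 < lam → IsProbabilityMeasure (Pstar ε lam))
    (φstar : ℝ → ℝ → α → ℝ) (φPx : ℝ)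
    (ΨP : ℝ) (Ψstar : ℝ → ℝ → ℝ) (R : ℝ → ℝ → ℝ)
    (hintP : ∀ ε lam : ℝ, 0 < ε → 0 < lam → Integrable (φstar ε lam) P)
    (hintH : ∀ ε lam : ℝ, 0 < ε → 0 < lam → Integrable (φstar ε lam) (H lam))
    -- expansion identity
    (hexp : ∀ ε lam : ℝ, 0 < ε → 0 < lam →
      Ψstar ε lam - ΨP = -(∫ u, φstar ε lam u ∂P) + R ε lam)
    -- centering of the efficient influence function
    (hcenter : ∀ ε lam : ℝ, 0 < ε → 0 < lam →
      ∫ u, φstar ε lam u ∂(Pstar ε lam) = 0)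
    -- (A1): solution of the EIF estimating equation
    (hA1 : ∀ ε lam : ℝ, 0 < ε → 0 < lam →
      ∫ u, φstar ε lam u ∂(ENNReal.ofReal (1 - ε) • P + ENNReal.ofReal ε • H lam) = 0)
    -- (A2): continuity of the EIF, as an iterated limit
    (hA2 : ∃ g : ℝ → ℝ,
      (∀ lam : ℝ, 0 < lam → Tendsto
        (fun ε => ∫ u, φstar ε lam u ∂(H lam) - ∫ u, φstar ε lam u ∂P)
        (𝓝[>] 0) (𝓝 (g lam))) ∧
      Tendsto g (𝓝[>] 0) (𝓝 φPx))
    -- (A3): preservation of the rate of convergence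
    (hA3 : ∃ g : ℝ → ℝ,
      (∀ lam : ℝ, 0 < lam → Tendsto (fun ε => R ε lam / ε) (𝓝[>] 0) (𝓝 (g lam))) ∧
      Tendsto g (𝓝[>] 0) (𝓝 0)) :
    ∃ g : ℝ → ℝ,
      (∀ lam : ℝ, 0 < lam → Tendsto (fun ε => (Ψstar ε lam - ΨP) / ε)
        (𝓝[>] 0) (𝓝 (g lam))) ∧
      Tendsto g (𝓝[>] 0) (𝓝 φPx) := by
  obtain ⟨g2, hg2, hg2lim⟩ := hA2
  obtain ⟨g3, hg3, hg3lim⟩ := hA3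
  refine ⟨fun lam => g2 lam + g3 lam, fun lam hlam => ?_, ?_⟩
  · have h := ((hg2 lam hlam).add (hg3 lam hlam))
    refine Tendsto.congr' ?_ h
    filter_upwards [Ioo_mem_nhdsGT_of_mem (by norm_num : (0:ℝ) ∈ Set.Ico 0 1)]
      with ε hε
    obtain ⟨hε0, hε1⟩ := hε
    have hP := hintP ε lam hε0 hlam
    have hH := hintH ε lam hε0 hlam
    set A := ∫ u, φstar ε lam u ∂P with hA
    set B := ∫ u, φstar ε lam u ∂(H lam) with hB
    have hsplit : (1 - ε) * A + ε * B = 0 := by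
      have h1 : Integrable (φstar ε lam) (ENNReal.ofReal (1 - ε) • P) :=
        hP.smul_measure ENNReal.ofReal_ne_top
      have h2 : Integrable (φstar ε lam) (ENNReal.ofReal ε • H lam) :=
        hH.smul_measure ENNReal.ofReal_ne_top
      have := hA1 ε lam hε0 hlam
      rw [integral_add_measure h1 h2, integral_smul_measure, integral_smul_measure,
        ENNReal.toReal_ofReal (by linarith), ENNReal.toReal_ofReal hε0.le] at this
      simpa [smul_eq_mul] using this
    have hAeq : -A = ε * (B - A) := by ring_nf; ring_nf at hsplit; linarith
    have heq : (Ψstar ε lam - ΨP) / ε = (B - A) + R ε lam / ε := by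
      rw [hexp ε lam hε0 hlam, ← hA, hAeq]
      field_simp
    simpa using heq.symm
  · simpa using hg2lim.add hg3lim
end

section
/- Let P* be a maximizer over Q ∈ 𝓜 of ∫ log(dQ/dν) dP_{ε}, where P_{ε} := (1−ε)P + εH, P ∈ 𝓜, and H ≪ P. Then ∫ log(dP*/dP) dP ≥ ε ∫ log(dP*/dP) d(P − H). -/
open MeasureTheory

theorem KL_projection_inequality {α : Type*} [MeasurableSpace α]
    (ν : Measure α) [SigmaFinite ν] (𝓜 : Set (Measure α))
    (P Pstar H : Measure α) [IsProbabilityMeasure P] [IsProbabilityMeasure Pstar]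
    [IsProbabilityMeasure H]
    (hP𝓜 : P ∈ 𝓜) (hPstar𝓜 : Pstar ∈ 𝓜) (hacH : H ≪ P) (hacPstar : Pstar ≪ P)
    (ε : ℝ) (hε0 : 0 < ε) (hε1 : ε < 1)
    (dens : Measure α → α → ℝ)
    (hdens : ∀ Q ∈ 𝓜, Q = ν.withDensity (fun u => ENNReal.ofReal (dens Q u)))
    (hintP : Integrable (fun u => Real.log (dens Pstar u) - Real.log (dens P u)) P)
    (hintH : Integrable (fun u => Real.log (dens Pstar u) - Real.log (dens P u)) H)
    (hintQ : ∀ Q ∈ 𝓜, Integrable (fun u => Real.log (dens Q u))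
      (ENNReal.ofReal (1 - ε) • P + ENNReal.ofReal ε • H))
    (hmax : ∀ Q ∈ 𝓜,
      ∫ u, Real.log (dens Q u) ∂(ENNReal.ofReal (1 - ε) • P + ENNReal.ofReal ε • H) ≤
      ∫ u, Real.log (dens Pstar u) ∂(ENNReal.ofReal (1 - ε) • P + ENNReal.ofReal ε • H)) :
    ∫ u, (Real.log (dens Pstar u) - Real.log (dens P u)) ∂P ≥
      ε * (∫ u, (Real.log (dens Pstar u) - Real.log (dens P u)) ∂P
         - ∫ u, (Real.log (dens Pstar u) - Real.log (dens P u)) ∂H) := by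
  set Pε : Measure α := ENNReal.ofReal (1 - ε) • P + ENNReal.ofReal ε • H with hPε
  have h1 : Integrable (fun u => Real.log (dens Pstar u)) Pε := hintQ Pstar hPstar𝓜
  have h2 : Integrable (fun u => Real.log (dens P u)) Pε := hintQ P hP𝓜
  have hge : 0 ≤ ∫ u, (Real.log (dens Pstar u) - Real.log (dens P u)) ∂Pε := by
    rw [integral_sub h1 h2]
    linarith [hmax P hP𝓜]
  have hdecomp : ∫ u, (Real.log (dens Pstar u) - Real.log (dens P u)) ∂Pε
      = (1 - ε) * ∫ u, (Real.log (dens Pstar u) - Real.log (dens P u)) ∂P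
        + ε * ∫ u, (Real.log (dens Pstar u) - Real.log (dens P u)) ∂H := by
    rw [hPε, integral_add_measure, integral_smul_measure, integral_smul_measure,
      ENNReal.toReal_ofReal (by linarith), ENNReal.toReal_ofReal hε0.le]
    · simp only [smul_eq_mul]; try ring
    · exact hintP.smul_measure ENNReal.ofReal_ne_top
    · exact hintH.smul_measure ENNReal.ofReal_ne_top
  rw [hdecomp] at hge
  linarith
end

section
/- Let P be a probability measure on ℝ with Lebesgue density p continuous at x with p(x) > 0, and let H_{x,λ} be the uniform distribution on (x−λ, x+λ). Then H_{x,λ} ≪ P for λ small enough and λ · ‖dH_{x,λ}/dP‖²_{L²(P)} → 1/(2 p(x)) as λ → 0⁺; in particular r(λ) := ‖dH_{x,λ}/dP‖_{L²(P)} is of exact order λ^{-1/2}. -/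
/-!
Absolute continuity only needs `p > 0` on the window, which holds for small `λ` by continuity
of `p` at `x`. For the rate, `λ · (2λ)⁻² ∫_{x-λ}^{x+λ} p⁻¹ = ½ · (2λ)⁻¹ ∫_{x-λ}^{x+λ} p⁻¹`, and the
symmetric average of `p⁻¹`, which is continuous at `x`, tends to `p(x)⁻¹` by the local fundamental
theorem of calculus.
-/

open MeasureTheory Filter Topology

theorem MeasureTheory.Measure.restrict_absolutelyContinuous_withDensity {α : Type*}
    [MeasurableSpace α] {μ : Measure α} {f : α → ENNReal} {s : Set α} (hs : MeasurableSet s)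
    (hf : AEMeasurable f (μ.restrict s)) (hf₀ : ∀ a ∈ s, f a ≠ 0) :
    μ.restrict s ≪ μ.withDensity f := by
  have h := withDensity_absolutelyContinuous' hf ((ae_restrict_iff' hs).2 (ae_of_all _ hf₀))
  rw [← restrict_withDensity hs] at h
  exact h.trans Measure.restrict_le_self.absolutelyContinuous

theorem ContinuousAt.tendsto_inv_two_mul_smul_setIntegral_Ioo {E : Type*} [NormedAddCommGroup E]
    [NormedSpace ℝ E] [CompleteSpace E] {f : ℝ → E} {x : ℝ} (hf : ContinuousAt f x)
    (hfm : StronglyMeasurableAtFilter f (𝓝 x)) :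
    Tendsto (fun t => (2 * t)⁻¹ • ∫ u in Set.Ioo (x - t) (x + t), f u) (𝓝[>] 0) (𝓝 (f x)) := by
  have hlo : Tendsto (fun t : ℝ => x - t) (𝓝[>] 0) (𝓝 x) := by
    simpa using (tendsto_const_nhds.sub tendsto_id).mono_left (nhdsWithin_le_nhds (a := (0 : ℝ)))
  have hhi : Tendsto (fun t : ℝ => x + t) (𝓝[>] 0) (𝓝 x) := by
    simpa using (tendsto_const_nhds.add tendsto_id).mono_left (nhdsWithin_le_nhds (a := (0 : ℝ)))
  have hsmall := (intervalIntegral.integral_sub_linear_isLittleO_of_tendsto_ae hfm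
    (hf.mono_left inf_le_left) hlo hhi).tendsto_inv_smul_nhds_zero
  refine tendsto_sub_nhds_zero_iff.1 (hsmall.congr' ?_)
  filter_upwards [self_mem_nhdsWithin] with t (ht : 0 < t)
  have hwidth : x + t - (x - t) = 2 * t := by ring
  simp only [Pi.sub_apply, hwidth, smul_sub, inv_smul_smul₀ (by positivity : (2 * t) ≠ 0),
    intervalIntegral.integral_of_le (by linarith : x - t ≤ x + t), integral_Ioc_eq_integral_Ioo]

theorem uniform_kernel_rate_general (x : ℝ) (p : ℝ → ℝ) (hpm : Measurable p)
    (hpcont : ContinuousAt p x) (hppos : 0 < p x) :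
    (∀ᶠ lam in 𝓝[>] (0 : ℝ),
      (ENNReal.ofReal (2 * lam))⁻¹ • (volume.restrict (Set.Ioo (x - lam) (x + lam))) ≪
        volume.withDensity (fun u => ENNReal.ofReal (p u))) ∧
    Tendsto
      (fun lam : ℝ =>
        lam * (((2 * lam) ^ 2)⁻¹ * ∫ u in Set.Ioo (x - lam) (x + lam), (p u)⁻¹))
      (𝓝[>] 0) (𝓝 (1 / (2 * p x))) := by
  constructor
  · obtain ⟨δ, hδ, hpos⟩ :=
      Metric.eventually_nhds_iff_ball.1 (hpcont.eventually (lt_mem_nhds hppos))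
    filter_upwards [Ioo_mem_nhdsGT hδ] with lam hlam
    refine Measure.smul_absolutelyContinuous.trans
      (Measure.restrict_absolutelyContinuous_withDensity measurableSet_Ioo
        hpm.ennreal_ofReal.aemeasurable fun u hu => ?_)
    refine (ENNReal.ofReal_pos.2 (hpos u ?_)).ne'
    rw [Metric.mem_ball, Real.dist_eq, abs_sub_lt_iff]
    constructor <;> linarith [hu.1, hu.2, hlam.2]
  · have hlim := ((hpcont.inv₀ hppos.ne').tendsto_inv_two_mul_smul_setIntegral_Ioo
      hpm.inv.stronglyMeasurable.stronglyMeasurableAtFilter).const_mul (1 / 2)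
    rw [← one_div_mul_one_div, one_div (p x)]
    refine hlim.congr' ?_
    filter_upwards [self_mem_nhdsWithin] with lam (hlam : 0 < lam)
    simp only [smul_eq_mul, Pi.inv_apply]
    field_simp

theorem uniform_kernel_rate (x : ℝ) (p : ℝ → ℝ) (hpm : Measurable p)
    (hp0 : ∀ u, 0 ≤ p u) (hp1 : ∫ u, p u = 1)
    (hpcont : ContinuousAt p x) (hppos : 0 < p x) :
    (∀ᶠ lam in 𝓝[>] (0 : ℝ),
      (ENNReal.ofReal (2 * lam))⁻¹ • (volume.restrict (Set.Ioo (x - lam) (x + lam))) ≪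
        volume.withDensity (fun u => ENNReal.ofReal (p u))) ∧
    Tendsto
      (fun lam : ℝ =>
        lam * (((2 * lam) ^ 2)⁻¹ * ∫ u in Set.Ioo (x - lam) (x + lam), (p u)⁻¹))
      (𝓝[>] 0) (𝓝 (1 / (2 * p x))) :=
  uniform_kernel_rate_general x p hpm hpcont hppos
end

section
/- Let P be a probability measure and suppose functions φ_{ε,λ}, φ_P ∈ L²(P) and probability measures H_{x,λ} ≪ P satisfy: (i) lim_{λ→0} ∫ φ_P dH_{x,λ} = φ_P(x); (ii) lim_{λ→0} lim_{ε→0} ∫ φ_{ε,λ} dP = 0; and (iii) lim_{λ→0} lim_{ε→0} r(λ)‖φ_{ε,λ} − φ_P‖_{L²(P)} = 0, where r(λ) := ‖dH_{x,λ}/dP‖_{L²(P)}. Then lim_{λ→0} lim_{ε→0} ∫ φ_{ε,λ} d(H_{x,λ} − P) = φ_P(x). -/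
/-!
Since `dH_λ = h_λ dP`, the defect splits as
`∫ (φ_{ε,λ} - φ_P) h_λ dP + (∫ φ_P dH_λ - φ_P(x)) - ∫ φ_{ε,λ} dP`.
Cauchy–Schwarz bounds the first term by `r(λ) ‖φ_{ε,λ} - φ_P‖_{L²(P)}`, so the three terms vanish
in the iterated limit by (iii), (i) and (ii) respectively. The iterated limit `ε → 0⁺`, then
`λ → 0⁺`, is a limit along the filter `(𝓝[>] 0).curry (𝓝[>] 0)` on pairs `(λ, ε)`.
-/

open MeasureTheory Filter Topology

namespace Filter

variable {X Y Z : Type*} {f : Filter X} {g : Filter Y}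

theorem tendsto_fst_curry : Tendsto Prod.fst (f.curry g) f :=
  fun _ hs => eventually_curry_iff.2 <|
    Eventually.mono hs fun _ hx => Eventually.of_forall fun _ => hx

theorem tendsto_curry_of_tendsto_of_tendsto [TopologicalSpace Z] {F : X → Y → Z} {G : X → Z}
    {c : Z} (hF : ∀ᶠ a in f, Tendsto (F a) g (𝓝 (G a))) (hG : Tendsto G f (𝓝 c)) :
    Tendsto ↿F (f.curry g) (𝓝 c) := by
  intro s hs
  rw [mem_map, mem_curry_iff]
  obtain ⟨U, hUs, hU, hcU⟩ := mem_nhds_iff.1 hs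
  filter_upwards [hF, hG (hU.mem_nhds hcU)] with a hFa hGa
  exact Eventually.mono (hFa (hU.mem_nhds hGa)) fun _ hb => hUs hb

end Filter

theorem exists_forall_of_eventually_nhdsGT {p : ℝ → Prop} (hp : ∀ᶠ t in 𝓝[>] 0, p t) :
    ∃ t₀, 0 < t₀ ∧ ∀ t, 0 < t → t < t₀ → p t := by
  obtain ⟨t₀, ht₀, hsub⟩ := mem_nhdsGT_iff_exists_Ioo_subset.1 hp
  exact ⟨t₀, ht₀, fun t h₀ h₁ => hsub ⟨h₀, h₁⟩⟩

theorem exists_forall_exists_forall_of_eventually_curry_nhdsGT {p : ℝ → ℝ → Prop}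
    (hp : ∀ᶠ q : ℝ × ℝ in (𝓝[>] 0).curry (𝓝[>] 0), p q.1 q.2) :
    ∃ s₀, 0 < s₀ ∧ ∀ s, 0 < s → s < s₀ → ∃ t₀, 0 < t₀ ∧ ∀ t, 0 < t → t < t₀ → p s t := by
  obtain ⟨s₀, hs₀, hs⟩ := exists_forall_of_eventually_nhdsGT (eventually_curry_iff.1 hp)
  exact ⟨s₀, hs₀, fun s h₀ h₁ => exists_forall_of_eventually_nhdsGT (hs s h₀ h₁)⟩

namespace MeasureTheory

variable {α : Type*} [MeasurableSpace α] {μ : Measure α}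

theorem abs_integral_mul_le_sqrt_mul_sqrt {f g : α → ℝ} (hf : MemLp f 2 μ) (hg : MemLp g 2 μ) :
    |∫ a, f a * g a ∂μ| ≤ √(∫ a, f a ^ 2 ∂μ) * √(∫ a, g a ^ 2 ∂μ) := by
  have hsqrt (k : α → ℝ) : (∫ a, ‖k a‖ ^ (2 : ℝ) ∂μ) ^ (1 / (2 : ℝ)) = √(∫ a, k a ^ 2 ∂μ) := by
    simp only [Real.rpow_two, Real.norm_eq_abs, sq_abs, Real.sqrt_eq_rpow]
  have htwo : ENNReal.ofReal 2 = 2 := by norm_num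
  calc |∫ a, f a * g a ∂μ| ≤ ∫ a, ‖f a‖ * ‖g a‖ ∂μ := by
        simpa only [Real.norm_eq_abs, abs_mul] using
          norm_integral_le_integral_norm (μ := μ) fun a => f a * g a
    _ ≤ _ := integral_mul_norm_le_Lp_mul_Lq Real.HolderConjugate.two_two
          (htwo ▸ hf) (htwo ▸ hg)
    _ = _ := by rw [hsqrt f, hsqrt g]

theorem integral_withDensity_ofReal {h : α → ℝ} (hm : Measurable h) (h0 : 0 ≤ᵐ[μ] h)
    (f : α → ℝ) :
    ∫ a, f a ∂(μ.withDensity fun a => ENNReal.ofReal (h a)) = ∫ a, h a * f a ∂μ := by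
  change ∫ a, f a ∂(μ.withDensity fun a => ((h a).toNNReal : ENNReal)) = _
  rw [integral_withDensity_eq_integral_smul hm.real_toNNReal]
  refine integral_congr_ae ?_
  filter_upwards [h0] with a ha
  simp [NNReal.smul_def, Real.coe_toNNReal _ ha]

theorem abs_integral_withDensity_sub_integral_sub_le {h f g : α → ℝ} (hm : Measurable h)
    (h0 : 0 ≤ᵐ[μ] h) (hh : MemLp h 2 μ) (hf : MemLp f 2 μ) (hg : MemLp g 2 μ) (c : ℝ) :
    |(∫ a, f a ∂(μ.withDensity fun a => ENNReal.ofReal (h a)) - ∫ a, f a ∂μ) - c| ≤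
      √(∫ a, h a ^ 2 ∂μ) * √(∫ a, (f a - g a) ^ 2 ∂μ) +
        |∫ a, g a ∂(μ.withDensity fun a => ENNReal.ofReal (h a)) - c| + |∫ a, f a ∂μ| := by
  set ν := μ.withDensity fun a => ENNReal.ofReal (h a)
  have hdiff : ∫ a, f a ∂ν - ∫ a, g a ∂ν = ∫ a, h a * (f a - g a) ∂μ := by
    simp only [ν, integral_withDensity_ofReal hm h0, mul_sub]
    exact (integral_sub (hh.integrable_mul hf) (hh.integrable_mul hg)).symm
  calc |(∫ a, f a ∂ν - ∫ a, f a ∂μ) - c|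
      = |(∫ a, f a ∂ν - ∫ a, g a ∂ν) + (∫ a, g a ∂ν - c) + -∫ a, f a ∂μ| := by
        congr 1; ring
    _ ≤ |∫ a, f a ∂ν - ∫ a, g a ∂ν| + |∫ a, g a ∂ν - c| + |-∫ a, f a ∂μ| := abs_add_three _ _ _
    _ ≤ _ := by
      rw [abs_neg, hdiff]
      gcongr
      exact abs_integral_mul_le_sqrt_mul_sqrt hh (hf.sub hg)

end MeasureTheory

theorem eif_continuity_general {α : Type*} [MeasurableSpace α]
    (P : Measure α) (x : α)
    (h : ℝ → α → ℝ) (hhm : ∀ lam, Measurable (h lam))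
    (hh0 : ∀ lam : ℝ, 0 < lam → ∀ᵐ u ∂P, 0 ≤ h lam u)
    (H : ℝ → Measure α)
    (hH : ∀ lam : ℝ, 0 < lam →
      H lam = P.withDensity (fun u => ENNReal.ofReal (h lam u)))
    (hhL2 : ∀ lam : ℝ, 0 < lam → MemLp (h lam) 2 P)
    (φ : ℝ → ℝ → α → ℝ) (φP : α → ℝ)
    (hφL2 : ∀ ε lam : ℝ, 0 < ε → 0 < lam → MemLp (φ ε lam) 2 P)
    (hφPL2 : MemLp φP 2 P)
    -- (i)
    (hi : Tendsto (fun lam => ∫ u, φP u ∂(H lam)) (𝓝[>] 0) (𝓝 (φP x)))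
    -- (ii)
    (hii : ∃ g : ℝ → ℝ,
      (∀ lam : ℝ, 0 < lam →
        Tendsto (fun ε => ∫ u, φ ε lam u ∂P) (𝓝[>] 0) (𝓝 (g lam))) ∧
      Tendsto g (𝓝[>] 0) (𝓝 0))
    -- (iii)
    (hiii : ∃ g : ℝ → ℝ,
      (∀ lam : ℝ, 0 < lam →
        Tendsto
          (fun ε => Real.sqrt (∫ u, (h lam u) ^ 2 ∂P) *
            Real.sqrt (∫ u, (φ ε lam u - φP u) ^ 2 ∂P))
          (𝓝[>] 0) (𝓝 (g lam))) ∧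
      Tendsto g (𝓝[>] 0) (𝓝 0)) :
    ∀ δ : ℝ, 0 < δ → ∃ lam₀ : ℝ, 0 < lam₀ ∧ ∀ lam : ℝ, 0 < lam → lam < lam₀ →
      ∃ ε₀ : ℝ, 0 < ε₀ ∧ ∀ ε : ℝ, 0 < ε → ε < ε₀ →
        |(∫ u, φ ε lam u ∂(H lam) - ∫ u, φ ε lam u ∂P) - φP x| < δ := by
  obtain ⟨g₂, hg₂, hg₂0⟩ := hii
  obtain ⟨g₃, hg₃, hg₃0⟩ := hiii
  set L := (𝓝[>] (0 : ℝ)).curry (𝓝[>] (0 : ℝ))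
  have hgt : ∀ᶠ t in 𝓝[>] (0 : ℝ), 0 < t := eventually_mem_nhdsWithin
  have hbound : ∀ᶠ p in L,
      |(∫ u, φ p.2 p.1 u ∂(H p.1) - ∫ u, φ p.2 p.1 u ∂P) - φP x| ≤
        √(∫ u, h p.1 u ^ 2 ∂P) * √(∫ u, (φ p.2 p.1 u - φP u) ^ 2 ∂P) +
          |∫ u, φP u ∂(H p.1) - φP x| + |∫ u, φ p.2 p.1 u ∂P| := by
    refine eventually_curry_iff.2 <| hgt.mono fun lam hlam => hgt.mono fun ε hε => ?_
    rw [hH lam hlam]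
    exact abs_integral_withDensity_sub_integral_sub_le (hhm lam) (hh0 lam hlam) (hhL2 lam hlam)
      (hφL2 ε lam hε hlam) hφPL2 _
  have hlim : Tendsto (fun p : ℝ × ℝ =>
      √(∫ u, h p.1 u ^ 2 ∂P) * √(∫ u, (φ p.2 p.1 u - φP u) ^ 2 ∂P) +
        |∫ u, φP u ∂(H p.1) - φP x| + |∫ u, φ p.2 p.1 u ∂P|) L (𝓝 0) := by
    have hr := tendsto_curry_of_tendsto_of_tendsto (hgt.mono hg₃) hg₃0
    have ha := (hi.sub_const (φP x)).abs.comp (tendsto_fst_curry (g := 𝓝[>] (0 : ℝ)))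
    have hb := (tendsto_curry_of_tendsto_of_tendsto (hgt.mono hg₂) hg₂0).abs
    have hsum := (hr.add ha).add hb
    simp only [sub_self, abs_zero, add_zero] at hsum
    exact hsum
  intro δ hδ
  refine exists_forall_exists_forall_of_eventually_curry_nhdsGT
    (p := fun lam ε => |(∫ u, φ ε lam u ∂(H lam) - ∫ u, φ ε lam u ∂P) - φP x| < δ) ?_
  filter_upwards [hbound, hlim.eventually (gt_mem_nhds hδ)] with p hle hlt using hle.trans_lt hlt

/-- Theorem 3(b) of the paper. -/
theorem eif_continuity {α : Type*} [MeasurableSpace α]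
    (P : Measure α) [IsProbabilityMeasure P] (x : α)
    (h : ℝ → α → ℝ) (hhm : ∀ lam, Measurable (h lam))
    (hh0 : ∀ lam : ℝ, 0 < lam → ∀ᵐ u ∂P, 0 ≤ h lam u)
    (H : ℝ → Measure α)
    (hH : ∀ lam : ℝ, 0 < lam →
      H lam = P.withDensity (fun u => ENNReal.ofReal (h lam u)))
    (hHprob : ∀ lam : ℝ, 0 < lam → IsProbabilityMeasure (H lam))
    (hhL2 : ∀ lam : ℝ, 0 < lam → MemLp (h lam) 2 P)
    (φ : ℝ → ℝ → α → ℝ) (φP : α → ℝ)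
    (hφL2 : ∀ ε lam : ℝ, 0 < ε → 0 < lam → MemLp (φ ε lam) 2 P)
    (hφPL2 : MemLp φP 2 P)
    -- (i)
    (hi : Tendsto (fun lam => ∫ u, φP u ∂(H lam)) (𝓝[>] 0) (𝓝 (φP x)))
    -- (ii)
    (hii : ∃ g : ℝ → ℝ,
      (∀ lam : ℝ, 0 < lam →
        Tendsto (fun ε => ∫ u, φ ε lam u ∂P) (𝓝[>] 0) (𝓝 (g lam))) ∧
      Tendsto g (𝓝[>] 0) (𝓝 0))
    -- (iii)
    (hiii : ∃ g : ℝ → ℝ,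
      (∀ lam : ℝ, 0 < lam →
        Tendsto
          (fun ε => Real.sqrt (∫ u, (h lam u) ^ 2 ∂P) *
            Real.sqrt (∫ u, (φ ε lam u - φP u) ^ 2 ∂P))
          (𝓝[>] 0) (𝓝 (g lam))) ∧
      Tendsto g (𝓝[>] 0) (𝓝 0)) :
    ∀ δ : ℝ, 0 < δ → ∃ lam₀ : ℝ, 0 < lam₀ ∧ ∀ lam : ℝ, 0 < lam → lam < lam₀ →
      ∃ ε₀ : ℝ, 0 < ε₀ ∧ ∀ ε : ℝ, 0 < ε → ε < ε₀ →
        |(∫ u, φ ε lam u ∂(H lam) - ∫ u, φ ε lam u ∂P) - φP x| < δ :=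
  eif_continuity_general P x h hhm hh0 H hH hhL2 φ φP hφL2 hφPL2 hi hii hiii
end
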